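/- The image of the coding map Π : E^∞ → T of a Mauldin-Williams graph equals the invariant set K = ⋃_{v∈V} K_v, where (K_v) is the unique invariant list; in particular, for each vertex v, Π(E^∞(v)) = K_v. -/

import Mathlib

/-!
A point of `K v` is the image under some `φ_e` of a point of `K (r e)`; choosing such
preimages over and over produces an infinite path `α` with `x ∈ φ_{α 0 ⋯ α k}(K)` for all `k`.
Conversely, the sets `φ_{α 0 ⋯ α k}(T)` have diameter at most `c^(k+1)` times a uniform bound
on the diameters of the `T v`, and each of them meets the closed set `K v`, so their common
point lies in `K v`.
-/

/-- The composition `φ_{α 0} ∘ ⋯ ∘ φ_{α k}` along a path `α`. -/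
def pathMap {V E : Type*} (T : V → Type*) (r s : E → V)
    (φ : (e : E) → T (r e) → T (s e)) (α : ℕ → E)
    (h : ∀ i, r (α i) = s (α (i + 1))) : (k : ℕ) → T (r (α k)) → T (s (α 0))
  | 0 => φ (α 0)
  | (k + 1) => fun x =>
      pathMap T r s φ α h k (cast (congrArg T (h k)).symm (φ (α (k + 1)) x))

open Set Filter Topology
open scoped NNReal

section Casts

variable {V : Type*} {T : V → Type*} {a b : V}

theorem isometry_cast_congrArg [∀ v, MetricSpace (T v)] (h : a = b) :
    Isometry (cast (congrArg T h)) := by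
  subst h; exact isometry_id

theorem mapsTo_cast_congrArg (K : ∀ v, Set (T v)) (h : a = b) :
    MapsTo (cast (congrArg T h)) (K a) (K b) := by
  subst h; exact mapsTo_id _

end Casts

theorem exists_forall_dist_le_of_finite {V : Type*} [Finite V] {T : V → Type*}
    [∀ v, MetricSpace (T v)] [∀ v, CompactSpace (T v)] :
    ∃ D, ∀ v (x y : T v), dist x y ≤ D := by
  obtain ⟨D, hD⟩ := (finite_range fun v => Metric.diam (univ : Set (T v))).bddAbove
  exact ⟨D, fun v x y => (Metric.dist_le_diam_of_mem isCompact_univ.isBounded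
    (mem_univ x) (mem_univ y)).trans (hD ⟨v, rfl⟩)⟩

section PathMap

variable {V E : Type*} {T : V → Type*} {r s : E → V} {φ : (e : E) → T (r e) → T (s e)}
  {α : ℕ → E} {hα : ∀ i, r (α i) = s (α (i + 1))}

theorem lipschitzWith_pathMap [∀ v, MetricSpace (T v)] {c : ℝ≥0}
    (hφ : ∀ e, LipschitzWith c (φ e)) :
    ∀ k, LipschitzWith (c ^ (k + 1)) (pathMap T r s φ α hα k)
  | 0 => by simpa [pathMap] using hφ (α 0)
  | k + 1 => by
    have h := (lipschitzWith_pathMap hφ k).comp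
      ((isometry_cast_congrArg (hα k).symm).lipschitz.comp (hφ (α (k + 1))))
    rwa [one_mul, ← pow_succ] at h

theorem mapsTo_pathMap {K : ∀ v, Set (T v)} (hK : ∀ e, MapsTo (φ e) (K (r e)) (K (s e))) :
    ∀ k, MapsTo (pathMap T r s φ α hα k) (K (r (α k))) (K (s (α 0)))
  | 0 => hK (α 0)
  | k + 1 => (mapsTo_pathMap hK k).comp
      ((mapsTo_cast_congrArg K (hα k).symm).comp (hK (α (k + 1))))

theorem mem_of_forall_mem_range_pathMap [∀ v, MetricSpace (T v)] {K : ∀ v, Set (T v)}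
    {c : ℝ≥0} (hc : c < 1) (hφ : ∀ e, LipschitzWith c (φ e))
    (hK : ∀ e, MapsTo (φ e) (K (r e)) (K (s e))) (hKc : ∀ v, IsClosed (K v))
    (hKn : ∀ v, (K v).Nonempty) {D : ℝ} (hD : ∀ v (x y : T v), dist x y ≤ D)
    {x : T (s (α 0))} (hx : ∀ k, x ∈ range (pathMap T r s φ α hα k)) :
    x ∈ K (s (α 0)) := by
  choose u hu using hx
  choose w hw using fun k => hKn (r (α k))
  refine (hKc _).mem_of_tendsto (f := fun k => pathMap T r s φ α hα k (w k)) (b := atTop) ?_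
    (Eventually.of_forall fun k => mapsTo_pathMap hK k (hw k))
  have hbound : ∀ k, dist (pathMap T r s φ α hα k (w k)) x ≤ (c : ℝ) ^ (k + 1) * D := by
    intro k
    calc dist (pathMap T r s φ α hα k (w k)) x
        = dist (pathMap T r s φ α hα k (w k)) (pathMap T r s φ α hα k (u k)) := by rw [hu]
      _ ≤ (c : ℝ) ^ (k + 1) * dist (w k) (u k) := by
        exact_mod_cast (lipschitzWith_pathMap hφ k).dist_le_mul (w k) (u k)
      _ ≤ (c : ℝ) ^ (k + 1) * D := by gcongr; exact hD _ _ _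
  have hlim : Tendsto (fun k => (c : ℝ) ^ (k + 1) * D) atTop (𝓝 0) := by
    simpa using ((tendsto_pow_atTop_nhds_zero_of_lt_one c.2 hc).comp
      (tendsto_add_atTop_nat 1)).mul_const D
  rw [tendsto_iff_dist_tendsto_zero]
  exact squeeze_zero (fun _ => dist_nonneg) hbound hlim

end PathMap

section Invariant

variable {V E : Type*} {T : V → Type*} {r s : E → V} {φ : (e : E) → T (r e) → T (s e)}
  {K : (v : V) → Set (T v)}
  (hKinv : ∀ v, K v = ⋃ (e : E), ⋃ (he : s e = v),
    (fun x => cast (congrArg T he) (φ e x)) '' K (r e))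
include hKinv

theorem mapsTo_of_invariant (e : E) : MapsTo (φ e) (K (r e)) (K (s e)) := by
  intro z hz
  rw [hKinv]
  exact mem_iUnion₂.2 ⟨e, rfl, z, hz, rfl⟩

theorem exists_preimage_of_invariant {w : V} {y : T w} (hy : y ∈ K w) :
    ∃ e, ∃ he : s e = w, ∃ z ∈ K (r e), cast (congrArg T he) (φ e z) = y := by
  rw [hKinv] at hy
  simpa only [mem_iUnion, mem_image] using hy

theorem exists_path_of_mem_invariant {v : V} {x : T v} (hx : x ∈ K v) :
    ∃ (α : ℕ → E) (hα : ∀ i, r (α i) = s (α (i + 1))) (h0 : s (α 0) = v),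
      ∀ k, cast (congrArg T h0).symm x ∈ range (pathMap T r s φ α hα k) := by
  choose e he z hz hφz using fun p : Σ w, K w => exists_preimage_of_invariant hKinv p.2.2
  let seq : ℕ → Σ w, K w := fun n => Nat.rec ⟨v, x, hx⟩ (fun _ p => ⟨r (e p), z p, hz p⟩) n
  let α : ℕ → E := fun n => e (seq n)
  have hα : ∀ i, r (α i) = s (α (i + 1)) := fun i => (he (seq (i + 1))).symm
  have h0 : s (α 0) = v := he (seq 0)
  refine ⟨α, hα, h0, fun k => ⟨z (seq k), ?_⟩⟩
  induction k with
  | zero => exact eq_cast_iff_heq.2 (cast_eq_iff_heq.1 (hφz (seq 0)))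
  | succ k ih => exact (congrArg (pathMap T r s φ α hα k) (hφz (seq (k + 1)))).trans ih

end Invariant

theorem stmt_8_general {V E : Type*} [Fintype V] (r s : E → V)
    (T : V → Type*) [∀ v, MetricSpace (T v)] [∀ v, CompactSpace (T v)]
    (φ : (e : E) → T (r e) → T (s e)) (c : ℝ) (hc0 : 0 < c) (hc1 : c < 1)
    (hφ : ∀ (e : E) (x y : T (r e)), dist (φ e x) (φ e y) ≤ c * dist x y)
    (K : (v : V) → Set (T v))
    (hKc : ∀ v, IsCompact (K v)) (hKn : ∀ v, (K v).Nonempty)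
    (hKinv : ∀ v, K v = ⋃ (e : E), ⋃ (he : s e = v),
      (fun x => cast (congrArg T he) (φ e x)) '' K (r e)) :
    ∀ v : V, K v = {x : T v |
      ∃ (α : ℕ → E) (hα : ∀ i, r (α i) = s (α (i + 1))) (h0 : s (α 0) = v),
        ∀ k, cast (congrArg T h0).symm x ∈
          pathMap T r s φ α hα k '' (Set.univ : Set (T (r (α k))))} := by
  intro v
  have hlip : ∀ e, LipschitzWith ⟨c, hc0.le⟩ (φ e) := fun e =>
    LipschitzWith.of_dist_le_mul (hφ e)
  obtain ⟨D, hD⟩ := exists_forall_dist_le_of_finite (T := T)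
  ext x
  simp only [image_univ, mem_ofPred_eq]
  refine ⟨exists_path_of_mem_invariant hKinv, ?_⟩
  rintro ⟨α, hα, h0, hx⟩
  have hxK := mem_of_forall_mem_range_pathMap (K := K) hc1 hlip (mapsTo_of_invariant hKinv)
    (fun v => (hKc v).isClosed) hKn hD hx
  simpa using mapsTo_cast_congrArg K h0 hxK

/-- The image of the coding map `Π : E^∞ → T` of a Mauldin–Williams graph equals the
invariant set: for each vertex `v`, the set of points `Π(α)` over infinite paths `α`
starting at `v` (i.e. the unique points of `⋂ k, φ_{α 0 ⋯ α k} '' T (r (α k))`)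
equals the member `K v` of the unique invariant list. -/
theorem stmt_8 {V E : Type*} [Fintype V] [Fintype E] (r s : E → V)
    (hnosink : ∀ v : V, ∃ e : E, s e = v)
    (hnosource : ∀ v : V, ∃ e : E, r e = v)
    (T : V → Type*) [∀ v, MetricSpace (T v)] [∀ v, CompactSpace (T v)]
    [∀ v, Nonempty (T v)]
    (φ : (e : E) → T (r e) → T (s e)) (c : ℝ) (hc0 : 0 < c) (hc1 : c < 1)
    (hφ : ∀ (e : E) (x y : T (r e)), dist (φ e x) (φ e y) ≤ c * dist x y)
    (K : (v : V) → Set (T v))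
    (hKc : ∀ v, IsCompact (K v)) (hKn : ∀ v, (K v).Nonempty)
    (hKinv : ∀ v, K v = ⋃ (e : E), ⋃ (he : s e = v),
      (fun x => cast (congrArg T he) (φ e x)) '' K (r e)) :
    ∀ v : V, K v = {x : T v |
      ∃ (α : ℕ → E) (hα : ∀ i, r (α i) = s (α (i + 1))) (h0 : s (α 0) = v),
        ∀ k, cast (congrArg T h0).symm x ∈
          pathMap T r s φ α hα k '' (Set.univ : Set (T (r (α k))))} :=
  stmt_8_general r s T φ c hc0 hc1 hφ K hKc hKn hKinv
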